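/- arXiv:2006.16461 — 7 statements merged into one kernel-verified Lean document; each statement's English description precedes it below -/
import Mathlib

section
/- For every integer n ≥ 2, the n-th Catalan number satisfies the recurrence C_n = Σ_{k=1}^{n} (-1)^{k+1} [ binom(2n-k, k) + binom(2n-k-1, k-1) ] · C_{n-k}. -/
/-!
Write `S m j = ∑_{k ≤ j} (-1)^k C(m-k, k) C_{j-k}`. Pascal's rule gives
`S (m+2) (j+1) = S (m+1) (j+1) - S m j`, and together with `S 0 j = S 1 j = C_j` this identifies
`S m j` with the ballot number `C(2j-m, j) - C(2j-m, j+1)` whenever `m ≤ 2j`. In particular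
`S (2j) j = 0` for `j ≥ 1`. Splitting the Kaplansky coefficient
`C(2n-k, k) + C(2n-k-1, k-1)` into its two binomials, the right-hand side of the recurrence is
`C_n - S (2n) n + S (2n-2) (n-1)`, and both sums vanish once `n ≥ 2`.
-/

open Finset

theorem catalan_eq_choose_sub_choose_succ (n : ℕ) :
    (catalan n : ℤ) = (2 * n).choose n - (2 * n).choose (n + 1) := by
  have hcat : ((n : ℤ) + 1) * catalan n = (2 * n).choose n := by
    exact_mod_cast succ_mul_catalan_eq_centralBinom n
  have hsucc : ((2 * n).choose (n + 1) : ℤ) * (n + 1) = (2 * n).choose n * n := by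
    have h := Nat.choose_succ_right_eq (2 * n) n
    rw [show 2 * n - n = n by omega] at h
    exact_mod_cast h
  apply mul_left_cancel₀ (by positivity : ((n : ℤ) + 1) ≠ 0)
  linear_combination hcat + hsucc

theorem catalan_succ_eq_choose_sub_choose_succ (n : ℕ) :
    (catalan (n + 1) : ℤ) = (2 * n + 1).choose (n + 1) - (2 * n + 1).choose (n + 2) := by
  rw [catalan_eq_choose_sub_choose_succ, show 2 * (n + 1) = 2 * n + 1 + 1 by ring,
    Nat.choose_succ_succ' (2 * n + 1) n, Nat.choose_succ_succ' (2 * n + 1) (n + 1),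
    Nat.choose_symm_half]
  push_cast
  ring

theorem Nat.choose_succ_sub_succ (m k : ℕ) :
    (m + 1 - k).choose (k + 1) = (m - k).choose (k + 1) + (m - k).choose k := by
  rcases le_or_gt k m with hkm | hmk
  · rw [Nat.succ_sub hkm, Nat.choose_succ_succ', add_comm]
  · rw [show m + 1 - k = 0 by omega, show m - k = 0 by omega,
      Nat.choose_eq_zero_of_lt (by omega : 0 < k + 1), Nat.choose_eq_zero_of_lt (by omega : 0 < k)]

def kaplanskySum (m j : ℕ) : ℤ :=
  ∑ k ∈ range (j + 1), (-1) ^ k * ((m - k).choose k : ℤ) * catalan (j - k)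

theorem kaplanskySum_of_le_one {m : ℕ} (hm : m ≤ 1) (j : ℕ) :
    kaplanskySum m j = catalan j := by
  rw [kaplanskySum, sum_eq_single_of_mem 0 (by simp)]
  · simp
  · intro k _ hk
    rw [Nat.choose_eq_zero_of_lt (by omega : m - k < k)]
    simp

theorem kaplanskySum_add_two (m j : ℕ) :
    kaplanskySum (m + 2) (j + 1) = kaplanskySum (m + 1) (j + 1) - kaplanskySum m j := by
  simp only [kaplanskySum]
  rw [sum_range_succ' _ (j + 1), sum_range_succ' _ (j + 1), Nat.choose_zero_right,
    Nat.choose_zero_right, add_sub_right_comm]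
  congr 1
  rw [← sum_sub_distrib]
  refine sum_congr rfl fun k _ => ?_
  rw [show m + 2 - (k + 1) = m + 1 - k by omega, show m + 1 - (k + 1) = m - k by omega,
    show j + 1 - (k + 1) = j - k by omega, Nat.choose_succ_sub_succ]
  push_cast
  ring

theorem kaplanskySum_eq_choose_sub_choose_succ {m j : ℕ} (h : m ≤ 2 * j) :
    kaplanskySum m j = (2 * j - m).choose j - (2 * j - m).choose (j + 1) := by
  induction m using Nat.twoStepInduction generalizing j with
  | zero => rw [kaplanskySum_of_le_one zero_le_one, catalan_eq_choose_sub_choose_succ]; rfl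
  | one =>
    obtain ⟨i, rfl⟩ : ∃ i, j = i + 1 := ⟨j - 1, by omega⟩
    rw [kaplanskySum_of_le_one le_rfl, catalan_succ_eq_choose_sub_choose_succ,
      show 2 * (i + 1) - 1 = 2 * i + 1 by omega]
  | more m ih₀ ih₁ =>
    obtain ⟨i, rfl⟩ : ∃ i, j = i + 1 := ⟨j - 1, by omega⟩
    obtain ⟨d, hd⟩ : ∃ d, 2 * i = m + d := ⟨2 * i - m, by omega⟩
    rw [kaplanskySum_add_two, ih₁ (by omega), ih₀ (by omega),
      show 2 * (i + 1) - (m + 1) = d + 1 by omega, show 2 * (i + 1) - (m + 2) = d by omega,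
      show 2 * i - m = d by omega, Nat.choose_succ_succ' d i, Nat.choose_succ_succ' d (i + 1)]
    push_cast
    ring

theorem kaplanskySum_two_mul_self {j : ℕ} (hj : 0 < j) : kaplanskySum (2 * j) j = 0 := by
  rw [kaplanskySum_eq_choose_sub_choose_succ le_rfl, Nat.sub_self,
    Nat.choose_eq_zero_of_lt hj, Nat.choose_eq_zero_of_lt (Nat.succ_pos j)]
  simp

theorem sum_Icc_kaplansky_coeff_mul_catalan (m j : ℕ) :
    ∑ k ∈ Icc 1 (j + 1), (-1 : ℤ) ^ (k + 1) *
        (((m + 2 - k).choose k + (m + 2 - k - 1).choose (k - 1) : ℕ) : ℤ) *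
        (catalan (j + 1 - k) : ℤ) =
      catalan (j + 1) - kaplanskySum (m + 2) (j + 1) + kaplanskySum m j := by
  have hfirst : kaplanskySum (m + 2) (j + 1) = catalan (j + 1) - ∑ k ∈ Icc 1 (j + 1),
      (-1 : ℤ) ^ (k + 1) * ((m + 2 - k).choose k : ℤ) * catalan (j + 1 - k) := by
    rw [kaplanskySum, sum_range_eq_add_Ico _ (Nat.succ_pos _), Nat.succ_eq_add_one,
      Ico_add_one_right_eq_Icc, sub_eq_add_neg, ← sum_neg_distrib]
    simp [pow_succ]
  have hsecond : kaplanskySum m j = ∑ k ∈ Icc 1 (j + 1),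
      (-1 : ℤ) ^ (k + 1) * ((m + 2 - k - 1).choose (k - 1) : ℤ) * catalan (j + 1 - k) := by
    rw [← Ico_add_one_right_eq_Icc, sum_Ico_eq_sum_range, show j + 1 + 1 - 1 = j + 1 by omega,
      kaplanskySum]
    refine sum_congr rfl fun k _ => ?_
    rw [show m + 2 - (1 + k) - 1 = m - k by omega, show 1 + k - 1 = k by omega,
      show j + 1 - (1 + k) = j - k by omega]
    ring
  rw [hfirst, hsecond, sub_sub_cancel, ← sum_add_distrib]
  refine sum_congr rfl fun k _ => ?_
  push_cast
  ring

/-- Lemma 4.2: the Catalan numbers satisfy the Kaplansky-coefficient recurrence. -/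
theorem catalan_kaplansky_recurrence (n : ℕ) (hn : 2 ≤ n) :
    (catalan n : ℤ) =
      ∑ k ∈ Finset.Icc 1 n, (-1 : ℤ) ^ (k + 1) *
        ((Nat.choose (2 * n - k) k + Nat.choose (2 * n - k - 1) (k - 1) : ℕ) : ℤ) *
        (catalan (n - k) : ℤ) := by
  obtain ⟨j, rfl⟩ : ∃ j, n = j + 1 := ⟨n - 1, by omega⟩
  rw [show 2 * (j + 1) = 2 * j + 2 by ring, sum_Icc_kaplansky_coeff_mul_catalan,
    ← mul_add_one, kaplanskySum_two_mul_self (j := j + 1) (Nat.succ_pos j),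
    kaplanskySum_two_mul_self (by omega)]
  ring
end

section
/- For every integer n ≥ 1, we have C_n · (n+1) = Σ_{k=1}^{n} (-1)^{k+1} [ binom(2n-k, k) + binom(2n-k-1, k-1) ] · C_{n-k} · (n-k+1). Equivalently, binom(2n, n) = Σ_{k=1}^{n} (-1)^{k+1} [ binom(2n-k, k) + binom(2n-k-1, k-1) ] · binom(2n-2k, n-k). -/
/-!
Trinomial revision turns `C(2n-k,k) C(2n-2k,n-k)` into `C(n,k) C(2n-k,n)`, and upper negation
writes `(-1)^(n-k) C(2n-k,n)` as `Ring.choose (-(n+1)) (n-k)`; Chu–Vandermonde then collapses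
the alternating sum to `Ring.choose (-1) n = (-1)^n`, giving
`∑_{k=0}^{n} (-1)^k C(2n-k,k) C(2n-2k,n-k) = 1`. The recurrence splits into two sums of this
shape: the `C(2n-k,k)` part is the identity at `n` without its `k = 0` term, the
`C(2n-k-1,k-1)` part is the identity at `n - 1` after shifting `k`.
-/

open Finset

theorem Ring.choose_neg_natCast_succ (b j : ℕ) :
    Ring.choose (-((b : ℤ) + 1)) j = (-1) ^ j * (b + j).choose j := by
  rw [Ring.choose_neg, Units.smul_def, Int.coe_negOnePow_natCast, smul_eq_mul,
    show (b : ℤ) + 1 + j - 1 = ((b + j : ℕ) : ℤ) by push_cast; ring, Ring.choose_natCast]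

theorem Ring.choose_neg_one (n : ℕ) : Ring.choose (-1 : ℤ) n = (-1) ^ n := by
  simpa using Ring.choose_neg_natCast_succ 0 n

theorem sum_antidiagonal_neg_one_pow_mul_choose_mul_add_choose (a b m : ℕ) :
    ∑ ij ∈ antidiagonal m, (-1 : ℤ) ^ ij.1 * a.choose ij.1 * (b + ij.2).choose ij.2 =
      (-1) ^ m * Ring.choose ((a : ℤ) - b - 1) m := by
  rw [show (a : ℤ) - b - 1 = a + -((b : ℤ) + 1) by ring,
    Ring.add_choose_eq _ (Commute.all _ _), mul_sum]
  refine sum_congr rfl fun ij hij => ?_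
  rw [HasAntidiagonal.mem_antidiagonal] at hij
  rw [Ring.choose_natCast, Ring.choose_neg_natCast_succ, ← hij, pow_add]
  linear_combination (-(-1) ^ ij.1 * a.choose ij.1 * (b + ij.2).choose ij.2 : ℤ) *
    pow_mul_pow_eq_one ij.2 (show (-1 : ℤ) * -1 = 1 by norm_num)

theorem choose_two_mul_sub_mul_choose {n k : ℕ} (hk : k ≤ n) :
    (2 * n - k).choose k * (2 * n - 2 * k).choose (n - k) =
      n.choose k * (2 * n - k).choose n := by
  rw [mul_comm (n.choose k), Nat.choose_mul hk, show 2 * n - k - k = 2 * n - 2 * k by omega]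

theorem alternating_sum_choose_two_mul_sub_mul_choose (n : ℕ) :
    ∑ k ∈ range (n + 1),
      (-1 : ℤ) ^ k * (2 * n - k).choose k * (2 * n - 2 * k).choose (n - k) = 1 := by
  have h := sum_antidiagonal_neg_one_pow_mul_choose_mul_add_choose n n n
  rw [sub_self, zero_sub, Ring.choose_neg_one, ← pow_add, Even.neg_one_pow ⟨n, rfl⟩,
    Nat.sum_antidiagonal_eq_sum_range_succ_mk] at h
  refine Eq.trans (sum_congr rfl fun k hk => ?_) h
  rw [mul_assoc, mul_assoc, ← Nat.cast_mul, choose_two_mul_sub_mul_choose (by grind),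
    show 2 * n - k = n + (n - k) by grind, Nat.choose_symm_add]
  push_cast
  ring

theorem sum_Icc_neg_one_pow_succ_mul_choose_two_mul_sub_mul_choose (n : ℕ) :
    ∑ k ∈ Icc 1 n,
      (-1 : ℤ) ^ (k + 1) * (2 * n - k).choose k * (2 * n - 2 * k).choose (n - k) =
        (2 * n).choose n - 1 := by
  have h := alternating_sum_choose_two_mul_sub_mul_choose n
  rw [Nat.range_succ_eq_Icc_zero, ← insert_Icc_add_one_left_eq_Icc n.zero_le,
    sum_insert (by simp)] at h
  simp only [pow_zero, Nat.sub_zero, mul_zero, Nat.choose_zero_right, Nat.cast_one, one_mul,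
    zero_add] at h
  simp only [pow_succ, mul_neg_one, neg_mul, sum_neg_distrib]
  linarith

theorem sum_Icc_neg_one_pow_succ_mul_choose_two_mul_sub_pred_mul_choose {n : ℕ} (hn : 1 ≤ n) :
    ∑ k ∈ Icc 1 n,
      (-1 : ℤ) ^ (k + 1) * (2 * n - k - 1).choose (k - 1) * (2 * n - 2 * k).choose (n - k) =
        1 := by
  obtain ⟨m, rfl⟩ := Nat.exists_eq_add_of_le' hn
  rw [show Icc 1 (m + 1) = (Icc 0 m).map (addRightEmbedding 1) by simp, sum_map,
    ← Nat.range_succ_eq_Icc_zero]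
  refine Eq.trans (sum_congr rfl fun k _ => ?_) (alternating_sum_choose_two_mul_sub_mul_choose m)
  rw [addRightEmbedding_apply, show 2 * (m + 1) - (k + 1) - 1 = 2 * m - k by omega,
    show 2 * (m + 1) - 2 * (k + 1) = 2 * m - 2 * k by omega, Nat.add_sub_cancel,
    Nat.add_sub_add_right, pow_succ, pow_succ]
  ring

theorem catalan_mul_succ_eq_choose (n : ℕ) : catalan n * (n + 1) = (2 * n).choose n := by
  rw [mul_comm, succ_mul_catalan_eq_centralBinom, Nat.centralBinom_eq_two_mul_choose]

/-- Lemma 4.3: `C_n (n+1)` satisfies the Kaplansky-coefficient recurrence;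
equivalently, an identity for central binomial coefficients. -/
theorem catalan_mul_succ_recurrence (n : ℕ) (hn : 1 ≤ n) :
    ((catalan n : ℤ) * (n + 1) =
      ∑ k ∈ Finset.Icc 1 n, (-1 : ℤ) ^ (k + 1) *
        ((Nat.choose (2 * n - k) k + Nat.choose (2 * n - k - 1) (k - 1) : ℕ) : ℤ) *
        (catalan (n - k) : ℤ) * ((n - k + 1 : ℕ) : ℤ))
    ∧
    ((Nat.choose (2 * n) n : ℤ) =
      ∑ k ∈ Finset.Icc 1 n, (-1 : ℤ) ^ (k + 1) *
        ((Nat.choose (2 * n - k) k + Nat.choose (2 * n - k - 1) (k - 1) : ℕ) : ℤ) *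
        ((Nat.choose (2 * n - 2 * k) (n - k) : ℕ) : ℤ)) := by
  have hbinom : ((2 * n).choose n : ℤ) = ∑ k ∈ Icc 1 n, (-1 : ℤ) ^ (k + 1) *
      ((Nat.choose (2 * n - k) k + Nat.choose (2 * n - k - 1) (k - 1) : ℕ) : ℤ) *
      ((Nat.choose (2 * n - 2 * k) (n - k) : ℕ) : ℤ) := by
    simp only [Nat.cast_add, mul_add, add_mul, sum_add_distrib,
      sum_Icc_neg_one_pow_succ_mul_choose_two_mul_sub_mul_choose,
      sum_Icc_neg_one_pow_succ_mul_choose_two_mul_sub_pred_mul_choose hn]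
    ring
  refine ⟨?_, hbinom⟩
  have hcatalan : (catalan n : ℤ) * (n + 1) = (2 * n).choose n := by
    exact_mod_cast catalan_mul_succ_eq_choose n
  rw [hcatalan, hbinom]
  refine sum_congr rfl fun k _ => ?_
  rw [mul_assoc _ (catalan (n - k) : ℤ), ← Nat.cast_mul, catalan_mul_succ_eq_choose,
    show 2 * (n - k) = 2 * n - 2 * k by grind]
end

section
/- Let r, s be integers and let f : ℕ → ℤ be any sequence satisfying f(0) = s, f(1) = r, and, for every integer n ≥ 2, f(n) = Σ_{k=1}^{n} (-1)^{k+1} [ binom(2n-k, k) + binom(2n-k-1, k-1) ] · f(n-k). Then for every n ≥ 0, f(n) = C_n · ((r - s) · n + s), where C_n is the n-th Catalan number. -/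
/-! The recurrence determines `f` from `f 0` and `f 1`, so it suffices that the closed form
`g n = C_n ((r - s) n + s)` satisfies it. Splitting the coefficient
`binom(2n-k, k) + binom(2n-k-1, k-1)` turns the recurrence into `D n = D (n - 1)` for the
transform `D N = ∑ₖ (-1)^k binom(2N-k, k) u(N-k)`, so it says exactly that `D` is constant
from `N = 1` on. For `g` that constant is `r - s`: since `C_j = binom(2j, j) - binom(2j, j+1)`
and `j C_j = binom(2j, j+1)`, this reduces to `∑ⱼ (-1)^(N-j) binom(N+j, 2j) binom(2j, j+a) = 1`
for `a ≤ N`, which after trinomial revision is the `(N-a)`-th forward difference of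
`x ↦ binom(x, N-a)`. -/

open Finset

def diagonalSum (u : ℕ → ℤ) (N : ℕ) : ℤ :=
  ∑ k ∈ range (N + 1), (-1) ^ k * ((2 * N - k).choose k : ℤ) * u (N - k)

theorem sum_range_neg_one_pow_mul_choose_mul_choose_add (M c : ℕ) :
    ∑ i ∈ range (M + 1), (-1 : ℤ) ^ (M - i) * M.choose i * (c + i).choose M = 1 := by
  have h := fwdDiff_iter_eq_sum_shift (h := 1) (fun x ↦ x.choose (M + 0) : ℕ → ℤ) M c
  rw [fwdDiff_iter_choose] at h
  simpa [smul_eq_mul] using h.symm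

theorem sum_range_neg_one_pow_mul_choose_two_mul_mul_choose {N a : ℕ} (ha : a ≤ N) :
    ∑ j ∈ range (N + 1),
      (-1 : ℤ) ^ (N - j) * ((N + j).choose (2 * j) * (2 * j).choose (j + a) : ℕ) = 1 := by
  obtain ⟨M, rfl⟩ := Nat.exists_eq_add_of_le ha
  rw [add_assoc, sum_range_add, sum_eq_zero, zero_add]
  · refine (sum_congr rfl fun i _ ↦ ?_).trans
      (sum_range_neg_one_pow_mul_choose_mul_choose_add M (2 * a + M))
    have h : (a + M + (a + i)).choose (2 * (a + i)) * (2 * (a + i)).choose (a + i + a)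
        = M.choose i * (2 * a + M + i).choose M := by
      rw [Nat.choose_mul (by omega), mul_comm,
        show a + M + (a + i) - (a + i + a) = M by omega,
        show 2 * (a + i) - (a + i + a) = i by omega,
        Nat.choose_symm_of_eq_add (show a + M + (a + i) = a + i + a + M by omega),
        show a + M + (a + i) = 2 * a + M + i by omega]
    rw [h, show a + M - (a + i) = M - i by omega]
    push_cast; ring
  · intro j hj
    rw [Nat.choose_eq_zero_of_lt (n := 2 * j) (by simp at hj; omega)]
    simp

theorem mul_catalan_eq_choose (n : ℕ) : n * catalan n = (2 * n).choose (n + 1) := by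
  have h1 := succ_mul_catalan_eq_centralBinom n
  have h2 := Nat.choose_succ_right_eq (2 * n) n
  rw [Nat.centralBinom_eq_two_mul_choose] at h1
  rw [show 2 * n - n = n by omega, ← h1] at h2
  apply Nat.eq_of_mul_eq_mul_right (show 0 < n + 1 by omega)
  rw [h2]; ring

theorem catalan_mul_affine_eq (a b : ℤ) (n : ℕ) :
    catalan n * (a * n + b) =
      a * (2 * n).choose (n + 1) + b * ((2 * n).choose n - (2 * n).choose (n + 1)) := by
  have h1 := succ_mul_catalan_eq_centralBinom n
  rw [Nat.centralBinom_eq_two_mul_choose] at h1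
  have h2 := mul_catalan_eq_choose n
  rw [← h1, ← h2]
  push_cast; ring

theorem diagonalSum_catalan_mul_affine (r s : ℤ) {N : ℕ} (hN : 1 ≤ N) :
    diagonalSum (fun n ↦ catalan n * ((r - s) * n + s)) N = r - s := by
  have hT0 := sum_range_neg_one_pow_mul_choose_two_mul_mul_choose (Nat.zero_le N)
  simp only [add_zero] at hT0
  have hT1 := sum_range_neg_one_pow_mul_choose_two_mul_mul_choose hN
  rw [diagonalSum, ← sum_range_reflect]
  calc _ = ∑ j ∈ range (N + 1),
        ((r - s) * ((-1 : ℤ) ^ (N - j) * ((N + j).choose (2 * j) * (2 * j).choose (j + 1) : ℕ))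
          + s * ((-1 : ℤ) ^ (N - j) * ((N + j).choose (2 * j) * (2 * j).choose j : ℕ)
            - (-1 : ℤ) ^ (N - j) * ((N + j).choose (2 * j) * (2 * j).choose (j + 1) : ℕ))) := by
        refine sum_congr rfl fun j hj ↦ ?_
        have hj : j ≤ N := by simp at hj; omega
        rw [show N + 1 - 1 - j = N - j by omega, show N - (N - j) = j by omega,
          show 2 * N - (N - j) = N + j by omega,
          Nat.choose_symm_of_eq_add (show N + j = N - j + 2 * j by omega), catalan_mul_affine_eq]
        push_cast; ring
    _ = r - s := by
        rw [sum_add_distrib, ← mul_sum, ← mul_sum, sum_sub_distrib, hT0, hT1]; ring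

theorem sum_Icc_eq_sub_diagonalSum_add (u : ℕ → ℤ) (n : ℕ) :
    ∑ k ∈ Icc 1 (n + 1), (-1 : ℤ) ^ (k + 1) *
        ((Nat.choose (2 * (n + 1) - k) k + Nat.choose (2 * (n + 1) - k - 1) (k - 1) : ℕ) : ℤ) *
        u (n + 1 - k)
      = u (n + 1) - diagonalSum u (n + 1) + diagonalSum u n := by
  rw [← Ico_add_one_right_eq_Icc, sum_Ico_eq_sum_range, Nat.add_sub_cancel, diagonalSum,
    diagonalSum, sum_range_succ' _ (n + 1)]
  simp only [pow_zero, Nat.sub_zero, Nat.choose_zero_right, Nat.cast_one, one_mul]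
  rw [sub_add_eq_sub_sub, sub_sub_cancel_left, neg_add_eq_sub, ← sum_sub_distrib]
  refine sum_congr rfl fun k _ ↦ ?_
  rw [show 2 * (n + 1) - (1 + k) - 1 = 2 * n - k by omega, show 1 + k - 1 = k by omega,
    show n + 1 - (1 + k) = n - k by omega, show n + 1 - (k + 1) = n - k by omega, add_comm 1 k]
  push_cast; ring

/-- Any sequence with `f 0 = s`, `f 1 = r` satisfying the Kaplansky-coefficient
recurrence is given by the Catalan closed form `f n = C_n ((r-s) n + s)`. -/
theorem recurrence_unique_solution (r s : ℤ) (f : ℕ → ℤ)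
    (h0 : f 0 = s) (h1 : f 1 = r)
    (hrec : ∀ n : ℕ, 2 ≤ n → f n =
      ∑ k ∈ Finset.Icc 1 n, (-1 : ℤ) ^ (k + 1) *
        ((Nat.choose (2 * n - k) k + Nat.choose (2 * n - k - 1) (k - 1) : ℕ) : ℤ) *
        f (n - k)) :
    ∀ n : ℕ, f n = (catalan n : ℤ) * ((r - s) * (n : ℤ) + s) := by
  intro n
  induction n using Nat.strong_induction_on with
  | _ n ih =>
    match n, ih with
    | 0, _ => simp [h0]
    | 1, _ => simp [h1]
    | n + 2, ih =>
      have hg := sum_Icc_eq_sub_diagonalSum_add (fun n ↦ catalan n * ((r - s) * n + s)) (n + 1)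
      rw [diagonalSum_catalan_mul_affine r s (by omega),
        diagonalSum_catalan_mul_affine r s (by omega)] at hg
      rw [hrec (n + 2) (by omega),
        sum_congr rfl fun k hk ↦ by rw [ih (n + 2 - k) (by simp at hk; omega)]]
      exact hg.trans (by ring)
end

section
/- For all integers n ≥ 1 and 0 ≤ k ≤ n, the identity (2n - k) · [ binom(2n-k, k) + binom(2n-k-1, k-1) ] · binom(2n-2k, n-k) = 2n · binom(n, k) · binom(2n-k, n) holds, where for k = 0 the term binom(2n-1, -1) is interpreted as 0. -/
/-!
With `m = 2n - k`, the absorption identity `m · C(m-1, k-1) = k · C(m, k)` turns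
`m · [C(m, k) + C(m-1, k-1)]` into `2n · C(m, k)`, and trinomial revision
`C(m, k) · C(m-k, n-k) = C(m, n) · C(n, k)` finishes the computation.
-/

theorem Nat.mul_choose_add_choose_pred (m k : ℕ) :
    m * (m.choose k + if k = 0 then 0 else (m - 1).choose (k - 1)) = (m + k) * m.choose k := by
  rcases k with _ | k
  · simp
  rcases m with _ | m
  · simp
  simp only [add_tsub_cancel_right, add_eq_zero, one_ne_zero, and_false, if_false]
  linear_combination Nat.add_one_mul_choose_eq m k

theorem kaplansky_rewrite_general (n k : ℕ) (hk : k ≤ n) :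
    (2 * n - k) *
      (Nat.choose (2 * n - k) k +
        if k = 0 then 0 else Nat.choose (2 * n - k - 1) (k - 1)) *
      Nat.choose (2 * n - 2 * k) (n - k)
    = 2 * n * Nat.choose n k * Nat.choose (2 * n - k) n := by
  have hsum : 2 * n - k + k = 2 * n := by omega
  have hsub : 2 * n - 2 * k = 2 * n - k - k := by omega
  rw [Nat.mul_choose_add_choose_pred, hsum, hsub, mul_assoc, ← Nat.choose_mul hk]
  ring

/-- Identity from the proof of Lemma 4.3:
`(2n-k)·[C(2n-k,k)+C(2n-k-1,k-1)]·C(2n-2k,n-k) = 2n·C(n,k)·C(2n-k,n)`,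
with the convention `C(2n-1,-1) = 0` when `k = 0`. -/
theorem kaplansky_rewrite (n k : ℕ) (hn : 1 ≤ n) (hk : k ≤ n) :
    (2 * n - k) *
      (Nat.choose (2 * n - k) k +
        if k = 0 then 0 else Nat.choose (2 * n - k - 1) (k - 1)) *
      Nat.choose (2 * n - 2 * k) (n - k)
    = 2 * n * Nat.choose n k * Nat.choose (2 * n - k) n :=
  kaplansky_rewrite_general n k hk
end

section
/- For every integer n ≥ 1, Σ_{k=0}^{n} (-1)^k [ binom(2n-k, k) + binom(2n-k-1, k-1) ] · binom(2n-2k, n-k) = 0, where for k = 0 the term binom(2n-1, -1) is interpreted as 0. -/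
/-!
Write `W k = (2n-k)! / (k! (n-k)!²)` and `m = 2n-k`. The bracket equals `(2n/m) C(m,k)`, so
`n` times the `k`-th term is `(-1)^k 2n² W k / m`, while `W (k+1) = (n-k)² W k / ((k+1) m)`.
As `2n² = 2km + 2(n-k)²`, this is `F k - F (k+1)` with `F k = (-1)^k 2k W k`, and the sum
telescopes to `F 0 - F (n+1) = 0`.
-/

open Finset

lemma sub_mul_choose_add_choose_pred (a k : ℕ) :
    (a - k) * ((a - k).choose k + if k = 0 then 0 else (a - k - 1).choose (k - 1)) =
      a * (a - k).choose k := by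
  rcases k with _ | k
  · simp
  rw [if_neg k.succ_ne_zero, Nat.add_sub_cancel]
  obtain hak | ⟨m, hm⟩ : a - (k + 1) = 0 ∨ ∃ m, a - (k + 1) = m + 1 :=
    (a - (k + 1)).eq_zero_or_eq_succ_pred.imp_right fun h => ⟨_, h⟩
  · simp [hak]
  · have ha : a = m + k + 2 := by omega
    rw [hm, Nat.add_sub_cancel, ha]
    linear_combination (Nat.add_one_mul_choose_eq m k)

-- The multinomial coefficient `(2n-k)! / (k! (n-k)! (n-k)!)`.
def kaplanskyWeight (n k : ℕ) : ℕ := (2 * n - k).choose n * n.choose k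

lemma choose_mul_choose_eq_kaplanskyWeight {n k : ℕ} (hk : k ≤ n) :
    (2 * n - k).choose k * (2 * n - 2 * k).choose (n - k) = kaplanskyWeight n k := by
  rw [kaplanskyWeight, Nat.choose_mul hk, show 2 * n - k - k = 2 * n - 2 * k by omega]

lemma succ_mul_sub_mul_kaplanskyWeight_succ {n k : ℕ} (hk : k < 2 * n) :
    (k + 1) * (2 * n - k) * kaplanskyWeight n (k + 1) = (n - k) ^ 2 * kaplanskyWeight n k := by
  obtain ⟨m, hm⟩ : ∃ m, 2 * n - k = m + 1 := ⟨2 * n - k - 1, by omega⟩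
  have hbig := Nat.choose_mul_succ_eq m n
  have hsmall := Nat.choose_succ_right_eq n k
  rw [show m + 1 - n = n - k by omega] at hbig
  rw [kaplanskyWeight, kaplanskyWeight, hm, show 2 * n - (k + 1) = m by omega]
  calc (k + 1) * (m + 1) * (m.choose n * n.choose (k + 1))
      = (m.choose n * (m + 1)) * (n.choose (k + 1) * (k + 1)) := by ring
    _ = (n - k) ^ 2 * ((m + 1).choose n * n.choose k) := by rw [hbig, hsmall]; ring

lemma mul_bracket_mul_choose_eq_kaplanskyWeight {n k : ℕ} (hn : 1 ≤ n) (hk : k ≤ n) :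
    n * (((2 * n - k).choose k + if k = 0 then 0 else (2 * n - k - 1).choose (k - 1)) *
        (2 * n - 2 * k).choose (n - k)) =
      2 * k * kaplanskyWeight n k + 2 * (k + 1) * kaplanskyWeight n (k + 1) := by
  have hpos : 0 < 2 * n - k := by omega
  refine Nat.eq_of_mul_eq_mul_left hpos ?_
  have hbracket := sub_mul_choose_add_choose_pred (2 * n) k
  have hratio := succ_mul_sub_mul_kaplanskyWeight_succ (show k < 2 * n by omega)
  have hweight := choose_mul_choose_eq_kaplanskyWeight hk
  obtain ⟨j, rfl⟩ : ∃ j, n = k + j := ⟨n - k, by omega⟩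
  rw [show 2 * (k + j) - k = k + 2 * j by omega] at *
  rw [show k + j - k = j by omega] at hratio
  linear_combination (k + j) * (2 * (k + j) - 2 * k).choose (k + j - k) * hbracket
    + 2 * (k + j) ^ 2 * hweight - 2 * hratio

/-- Lemma 4.3 as a vanishing alternating sum, including the `k = 0` term,
with the convention `C(2n-1,-1) = 0` when `k = 0`. -/
theorem alternating_kaplansky_sum_eq_zero (n : ℕ) (hn : 1 ≤ n) :
    ∑ k ∈ Finset.range (n + 1), (-1 : ℤ) ^ k *
      ((Nat.choose (2 * n - k) k +
          (if k = 0 then 0 else Nat.choose (2 * n - k - 1) (k - 1)) : ℕ) : ℤ) *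
      ((Nat.choose (2 * n - 2 * k) (n - k) : ℕ) : ℤ) = 0 := by
  set F : ℕ → ℤ := fun k => (-1) ^ k * (2 * k * kaplanskyWeight n k)
  refine (mul_eq_zero.mp ?_).resolve_left (Nat.cast_ne_zero.mpr (by omega) : (n : ℤ) ≠ 0)
  rw [mul_sum, sum_congr rfl (g := fun k => F k - F (k + 1)), sum_range_sub']
  · simp [F, kaplanskyWeight]
  · intro k hk
    have h := congrArg (Nat.cast : ℕ → ℤ)
      (mul_bracket_mul_choose_eq_kaplanskyWeight hn (mem_range_succ_iff.mp hk))
    simp only [F]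
    push_cast at h ⊢
    linear_combination (-1 : ℤ) ^ k * h
end

section
/- For every integer n ≥ 1, the rational number Σ_{k=0}^{n} (-1)^k · binom(n, k) · binom(2n-k, n) / (2n - k) equals 0. -/
/-!
Since `C(N+1, n)/(N+1) = C(N, n-1)/n`, the sum is `1/n` times
`∑ₖ (-1)^k C(n,k) C(2n-1-k, n-1)`, the coefficient of `X^(n-1)` in
`∑ₖ (-1)^k C(n,k) (X+1)^(2n-1-k) = (X+1)^(n-1) ((X+1) - 1)^n = (X+1)^(n-1) X^n`,
which vanishes.
-/

open Polynomial Finset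

theorem sum_neg_one_pow_mul_choose_mul_X_add_one_pow {R : Type*} [CommRing R] (m n : ℕ) :
    ∑ k ∈ range (n + 1), C ((-1 : R) ^ k * n.choose k) * (X + 1) ^ (m + n - k) =
      (X + 1) ^ m * X ^ n := by
  have binomial : (X : R[X]) ^ n =
      ∑ k ∈ range (n + 1), (-1) ^ k * (X + 1) ^ (n - k) * (n.choose k : R[X]) := by
    rw [← add_pow]; ring
  rw [binomial, mul_sum]
  refine sum_congr rfl fun k hk => ?_
  rw [show m + n - k = m + (n - k) by have := mem_range.mp hk; omega, pow_add]
  simp only [map_mul, map_pow, map_neg, map_one, map_natCast]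
  ring

theorem sum_neg_one_pow_mul_choose_mul_choose_add_sub_eq_zero {R : Type*} [CommRing R]
    {m n j : ℕ} (hj : j < n) :
    ∑ k ∈ range (n + 1), (-1 : R) ^ k * n.choose k * (m + n - k).choose j = 0 := by
  have h := congrArg (coeff · j) (sum_neg_one_pow_mul_choose_mul_X_add_one_pow (R := R) m n)
  simpa only [finsetSum_coeff, coeff_C_mul, coeff_X_add_one_pow, coeff_mul_X_pow',
    if_neg (not_le.mpr hj)] using h

theorem choose_succ_succ_div_succ {K : Type*} [Field K] [CharZero K] (N j : ℕ) :
    ((N + 1).choose (j + 1) : K) / (N + 1 : ℕ) = N.choose j / (j + 1 : ℕ) := by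
  rw [div_eq_div_iff (by norm_cast) (by norm_cast), mul_comm _ ((N + 1 : ℕ) : K)]
  exact_mod_cast (Nat.add_one_mul_choose_eq N j).symm

/-- Vanishing identity from the proof of Lemma 4.3:
`Σ_{k=0}^n (-1)^k C(n,k) C(2n-k,n) / (2n-k) = 0` in `ℚ`. -/
theorem alternating_binom_sum_eq_zero (n : ℕ) (hn : 1 ≤ n) :
    ∑ k ∈ Finset.range (n + 1), (-1 : ℚ) ^ k *
      (Nat.choose n k : ℚ) * (Nat.choose (2 * n - k) n : ℚ) / ((2 * n - k : ℕ) : ℚ) = 0 := by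
  obtain ⟨m, rfl⟩ := Nat.exists_eq_add_of_le' hn
  have reindex : ∀ k ∈ range (m + 1 + 1),
      (-1 : ℚ) ^ k * (m + 1).choose k * (2 * (m + 1) - k).choose (m + 1) / (2 * (m + 1) - k : ℕ) =
        (-1 : ℚ) ^ k * (m + 1).choose k * (m + (m + 1) - k).choose m / (m + 1 : ℕ) := by
    intro k hk
    rw [show 2 * (m + 1) - k = m + (m + 1) - k + 1 by have := mem_range.mp hk; omega,
      mul_div_assoc, choose_succ_succ_div_succ, mul_div_assoc]
  rw [sum_congr rfl reindex, ← sum_div,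
    sum_neg_one_pow_mul_choose_mul_choose_add_sub_eq_zero (Nat.lt_succ_self m), zero_div]
end

section
/- For every integer n ≥ 1, the rational number S_n := Σ_{k=0}^{n} (-1)^{n-k} · binom(n, n-k) · binom(n+k, n) / (n + k) equals 0. -/
/-!
Since `C(n+k, n) / (n+k) = C(n-1+k, n-1) / n`, the sum is `1/n` times the `n`-th forward difference
of `x ↦ C(x, n-1)` at `x = n-1`, and the `n`-th forward difference of a binomial coefficient
`C(x, j)` with `j < n` vanishes.
-/

open Finset fwdDiff

theorem fwdDiff_iter_choose_eq_zero_of_lt {j n : ℕ} (h : j < n) :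
    (Δ_[1])^[n] (fun x ↦ x.choose j : ℕ → ℤ) = 0 := by
  obtain ⟨t, rfl⟩ := Nat.exists_eq_add_of_lt h
  have h_iter_j : (Δ_[1])^[j] (fun x ↦ x.choose j : ℕ → ℤ) = fun _ ↦ 1 := by
    simpa using fwdDiff_iter_choose 0 j
  rw [show j + t + 1 = t + 1 + j by ring, Function.iterate_add_apply, h_iter_j,
    Function.iterate_succ_apply, fwdDiff_const]
  exact Function.iterate_fixed (fwdDiff_const 1 0) t

theorem sum_neg_one_pow_mul_choose_mul_choose_add_eq_zero (m : ℕ) {j n : ℕ} (h : j < n) :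
    ∑ k ∈ range (n + 1), (-1 : ℤ) ^ (n - k) * n.choose k * (m + k).choose j = 0 := by
  have := congr_fun (fwdDiff_iter_choose_eq_zero_of_lt h) m
  simpa [fwdDiff_iter_eq_sum_shift, mul_assoc] using this

theorem cast_choose_add_one_add_div {K : Type*} [Field K] [CharZero K] (n k : ℕ) :
    ((n + 1 + k).choose (n + 1) : K) / ((n + 1 + k : ℕ) : K) =
      ((n + k).choose n : K) / (n + 1) := by
  have h := Nat.add_one_mul_choose_eq (n + k) n
  rw [show n + k + 1 = n + 1 + k by omega] at h
  rw [div_eq_div_iff (Nat.cast_ne_zero.mpr (by omega)) (Nat.cast_add_one_ne_zero n)]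
  exact_mod_cast h.symm.trans (mul_comm _ _)

/-- The quantity `S_n = Σ_{k=0}^n (-1)^{n-k} C(n,n-k) C(n+k,n) / (n+k)` vanishes. -/
theorem S_n_eq_zero (n : ℕ) (hn : 1 ≤ n) :
    ∑ k ∈ Finset.range (n + 1), (-1 : ℚ) ^ (n - k) *
      (Nat.choose n (n - k) : ℚ) * (Nat.choose (n + k) n : ℚ) / ((n + k : ℕ) : ℚ) = 0 := by
  obtain ⟨m, rfl⟩ := Nat.exists_eq_add_of_le' hn
  calc _ = ∑ k ∈ range (m + 1 + 1),
        (-1 : ℚ) ^ (m + 1 - k) * ((m + 1).choose k : ℚ) * ((m + k).choose m : ℚ) / (m + 1) := by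
        refine sum_congr rfl fun k hk ↦ ?_
        rw [Nat.choose_symm (Nat.lt_succ_iff.mp (mem_range.mp hk)), mul_div_assoc,
          cast_choose_add_one_add_div, mul_div_assoc]
    _ = ((∑ k ∈ range (m + 1 + 1),
        (-1 : ℤ) ^ (m + 1 - k) * (m + 1).choose k * (m + k).choose m : ℤ) : ℚ) / (m + 1) := by
        push_cast [sum_div]
        rfl
    _ = 0 := by
        rw [sum_neg_one_pow_mul_choose_mul_choose_add_eq_zero m (Nat.lt_succ_self m)]
        simp
end
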